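/- There exists a Newton polyhedron of finite volume in ℝ≥0^d for some d ≥ 3 that is not a sum of elementary polyhedra, where an elementary polyhedron has at most one compact (d−1)-dimensional face and its noncompact (d−1)-faces lie in coordinate hyperplanes. -/

import Mathlib

open Pointwise MeasureTheory

/-- The positive quadrant `ℝ≥0^d`. -/
def Qk (d : ℕ) : Set (Fin d → ℝ) := {x | ∀ i, 0 ≤ x i}

/-- A Newton polyhedron: a closed convex subset of `ℝ≥0^d` stable under adding the quadrant. -/
def IsNewtonPolyhedron {d : ℕ} (N : Set (Fin d → ℝ)) : Prop :=
  IsClosed N ∧ Convex ℝ N ∧ N ⊆ Qk d ∧ N + Qk d = N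

/-- An elementary Newton polyhedron: the standard simplex up to affinity, i.e. the part of
the quadrant above a hyperplane with positive coefficients; it has at most one compact
`(d-1)`-dimensional face, and its noncompact facets lie in coordinate hyperplanes. -/
def IsElementaryPolyhedron {d : ℕ} (E : Set (Fin d → ℝ)) : Prop :=
  ∃ c : Fin d → ℝ, (∀ i, 0 < c i) ∧ ∃ r : ℝ, 0 ≤ r ∧
    E = {x ∈ Qk d | r ≤ ∑ i, c i * x i}

/-!
Every linear form `v ≥ 0` attains its minimum `σ_P(v)` on an elementary polyhedron
`P = {x ≥ 0 | r ≤ c ⬝ᵥ x}`, namely `r · minᵢ vᵢ / cᵢ`, and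
`min p + min q ≤ min (p ⊓ q) + min (p ⊔ q)` for vectors `p, q`. Minima of linear forms add up
under Minkowski sums and are unchanged by convex hulls, so the support function `σ` of any sum of
elementary polyhedra satisfies `σ p + σ q ≤ σ (p ⊓ q) + σ (p ⊔ q)`. For the Newton polyhedron
`N = {x ≥ 0 | x₀ + 2x₁ + x₂ ≥ 3, 2x₀ + x₁ + x₂ ≥ 3}` and `p = (1,2,1)`, `q = (2,1,1)` this fails:
`σ_N p = σ_N q = 3`, while the vertices `(1,1,0)` and `(0,0,3)` give
`σ_N (1,1,1) ≤ 2` and `σ_N (2,2,1) ≤ 3`.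
-/

theorem IsLeast.fintype_sum {ι : Type*} [Fintype ι] {T : ι → Set ℝ} {a : ι → ℝ}
    (h : ∀ i, IsLeast (T i) (a i)) : IsLeast (∑ i, T i) (∑ i, a i) := by
  refine ⟨Set.finsetSum_mem_finsetSum _ _ _ fun i _ => (h i).1, ?_⟩
  rintro _ hx
  obtain ⟨g, hg, rfl⟩ := (Set.mem_fintype_sum _ _).1 hx
  exact Finset.sum_le_sum fun i _ => (h i).2 (hg i)

theorem IsLeast.convexHull {T : Set ℝ} {a : ℝ} (h : IsLeast T a) :
    IsLeast (convexHull ℝ T) a :=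
  ⟨subset_convexHull ℝ T h.1, fun _ hx => convexHull_min (fun _ hy => h.2 hy) (convex_Ici a) hx⟩

section Elementary

variable {d : ℕ} {c : Fin d → ℝ} {r : ℝ}

noncomputable def elementarySupport (c : Fin d → ℝ) (r : ℝ) (v : Fin d → ℝ) : ℝ :=
  r * ⨅ i, v i / c i

theorem isLeast_elementarySupport [NeZero d] (hc : ∀ i, 0 < c i) (hr : 0 ≤ r)
    {v : Fin d → ℝ} (hv : 0 ≤ v) :
    IsLeast ((v ⬝ᵥ ·) '' {x ∈ Qk d | r ≤ c ⬝ᵥ x}) (elementarySupport c r v) := by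
  set m := ⨅ i, v i / c i
  constructor
  · obtain ⟨j, hj⟩ := exists_eq_ciInf_of_finite (f := fun i => v i / c i)
    refine ⟨Pi.single j (r / c j), ⟨?_, ?_⟩, ?_⟩
    · exact (Pi.single_nonneg.2 (div_nonneg hr (hc j).le) : (0 : Fin d → ℝ) ≤ _)
    · simp [mul_div_cancel₀ r (hc j).ne']
    · simp only [dotProduct_single, elementarySupport, ← hj]
      ring
  · rintro _ ⟨x, ⟨hx, hrx⟩, rfl⟩
    have hm : 0 ≤ m := le_ciInf fun i => div_nonneg (hv i) (hc i).le
    have hmc : m • c ≤ v := fun i =>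
      (le_div_iff₀ (hc i)).1 (ciInf_le (Set.finite_range _).bddBelow i)
    calc r * m ≤ (c ⬝ᵥ x) * m := mul_le_mul_of_nonneg_right hrx hm
      _ = (m • c) ⬝ᵥ x := by rw [smul_dotProduct, smul_eq_mul, mul_comm]
      _ ≤ v ⬝ᵥ x := dotProduct_le_dotProduct_of_nonneg_right hmc hx

theorem elementarySupport_add_le_inf_add_sup [NeZero d] (hc : ∀ i, 0 < c i) (hr : 0 ≤ r)
    (p q : Fin d → ℝ) :
    elementarySupport c r p + elementarySupport c r q ≤
      elementarySupport c r (p ⊓ q) + elementarySupport c r (p ⊔ q) := by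
  set a := ⨅ i, p i / c i
  set b := ⨅ i, q i / c i
  have hpa i : a ≤ p i / c i := ciInf_le (Set.finite_range _).bddBelow i
  have hqb i : b ≤ q i / c i := ciInf_le (Set.finite_range _).bddBelow i
  have hinf : min a b ≤ ⨅ i, (p ⊓ q) i / c i := le_ciInf fun i => by
    rw [Pi.inf_apply, ← min_div_div_right (hc i).le]
    exact min_le_min (hpa i) (hqb i)
  have hsup : max a b ≤ ⨅ i, (p ⊔ q) i / c i := le_ciInf fun i => by
    rw [Pi.sup_apply, ← max_div_div_right (hc i).le]
    exact max_le_max (hpa i) (hqb i)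
  simp only [elementarySupport, ← mul_add]
  exact mul_le_mul_of_nonneg_left (by linarith [min_add_max a b]) hr

end Elementary

theorem exists_supermodular_support_convexHull_sum_elementary {d n : ℕ} [NeZero d]
    {E : Fin n → Set (Fin d → ℝ)} (hE : ∀ i, IsElementaryPolyhedron (E i)) :
    ∃ σ : (Fin d → ℝ) → ℝ,
      (∀ v, 0 ≤ v → IsLeast ((v ⬝ᵥ ·) '' convexHull ℝ (∑ i, E i)) (σ v)) ∧
      ∀ p q, σ p + σ q ≤ σ (p ⊓ q) + σ (p ⊔ q) := by
  choose c hc r hr hEcr using hE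
  have hEi i : E i = {x ∈ Qk d | r i ≤ c i ⬝ᵥ x} := hEcr i
  refine ⟨fun v => ∑ i, elementarySupport (c i) (r i) v, fun v hv => ?_, fun p q => ?_⟩
  · have hsum := IsLeast.fintype_sum fun i => isLeast_elementarySupport (hc i) (hr i) hv
    simp only [← hEi] at hsum
    have hℓ : (v ⬝ᵥ ·) = dotProductBilin ℝ ℝ v := rfl
    rw [hℓ, ← Set.image_finsetSum] at hsum
    rw [hℓ, LinearMap.image_convexHull]
    exact hsum.convexHull
  · simp only [← Finset.sum_add_distrib]
    exact Finset.sum_le_sum fun i _ => elementarySupport_add_le_inf_add_sup (hc i) (hr i) p q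

section Newton

variable {d : ℕ}

theorem isElementaryPolyhedron_setOf_le_dotProduct {c : Fin d → ℝ} (hc : ∀ i, 0 < c i)
    {r : ℝ} (hr : 0 ≤ r) : IsElementaryPolyhedron {x ∈ Qk d | r ≤ c ⬝ᵥ x} :=
  ⟨c, hc, r, hr, rfl⟩

theorem IsNewtonPolyhedron.inter {N M : Set (Fin d → ℝ)} (hN : IsNewtonPolyhedron N)
    (hM : IsNewtonPolyhedron M) : IsNewtonPolyhedron (N ∩ M) := by
  refine ⟨hN.1.inter hM.1, hN.2.1.inter hM.2.1, Set.inter_subset_left.trans hN.2.2.1, ?_⟩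
  refine (Set.inter_add_subset.trans ?_).antisymm
    fun x hx => ⟨x, hx, 0, le_refl (0 : Fin d → ℝ), add_zero x⟩
  rw [hN.2.2.2, hM.2.2.2]

theorem IsElementaryPolyhedron.isNewtonPolyhedron {E : Set (Fin d → ℝ)}
    (hE : IsElementaryPolyhedron E) : IsNewtonPolyhedron E := by
  obtain ⟨c, hc, r, -, rfl⟩ := hE
  refine ⟨?_, ?_, fun x hx => hx.1, ?_⟩
  · exact (isClosed_Ici (a := (0 : Fin d → ℝ))).inter
      (isClosed_le continuous_const (continuous_const.dotProduct continuous_id))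
  · exact (convex_Ici (0 : Fin d → ℝ)).inter
      (convex_halfSpace_ge (dotProductBilin ℝ ℝ c).isLinear r)
  · refine Set.Subset.antisymm ?_ fun x hx => ⟨x, hx, 0, le_refl (0 : Fin d → ℝ), add_zero x⟩
    rintro _ ⟨x, ⟨hx, hrx⟩, y, hy, rfl⟩
    have hcy : 0 ≤ c ⬝ᵥ y := dotProduct_nonneg_of_nonneg (fun i => (hc i).le) hy
    refine ⟨add_nonneg (a := x) hx hy, ?_⟩
    change r ≤ c ⬝ᵥ (x + y)
    rw [dotProduct_add]
    exact le_add_of_le_of_nonneg hrx hcy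

theorem IsElementaryPolyhedron.volume_diff_lt_top {E : Set (Fin d → ℝ)}
    (hE : IsElementaryPolyhedron E) : volume (Qk d \ E) < ⊤ := by
  obtain ⟨c, hc, r, -, rfl⟩ := hE
  refine (measure_mono fun x hx => ?_).trans_lt
    (measure_Icc_lt_top (a := 0) (b := fun i => r / c i))
  obtain ⟨hx, hrx⟩ := hx
  have hcx : c ⬝ᵥ x < r := lt_of_not_ge fun h => hrx ⟨hx, h⟩
  refine ⟨hx, fun i => (le_div_iff₀' (hc i)).2 ?_⟩
  calc c i * x i ≤ c ⬝ᵥ x :=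
        Finset.single_le_sum (f := fun j => c j * x j)
          (fun j _ => mul_nonneg (hc j).le (hx j)) (Finset.mem_univ i)
    _ ≤ r := hcx.le

theorem IsNewtonPolyhedron.convexHull_iUnion_add_subset {N : Set (Fin d → ℝ)}
    (hN : IsNewtonPolyhedron N) {ι : Type*} {w : ι → Fin d → ℝ} (hw : ∀ i, w i ∈ N) :
    convexHull ℝ (⋃ i, {w i} + Qk d) ⊆ N := by
  refine convexHull_min (Set.iUnion_subset fun i => ?_) hN.2.1
  rw [← hN.2.2.2]
  exact Set.add_subset_add_right (Set.singleton_subset_iff.2 (hw i))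

theorem mem_convexHull_iUnion_add_of_sum_smul_le {ι : Type*} [Fintype ι] {w : ι → Fin d → ℝ}
    {t : ι → ℝ} (ht : 0 ≤ t) (ht1 : ∑ i, t i = 1) {x : Fin d → ℝ} (hx : ∑ i, t i • w i ≤ x) :
    x ∈ convexHull ℝ (⋃ i, {w i} + Qk d) := by
  set u := x - ∑ i, t i • w i
  have hmem := (convex_convexHull ℝ (⋃ i, {w i} + Qk d)).sum_mem (z := fun i => w i + u)
    (fun i _ => ht i) ht1 fun i _ =>
      subset_convexHull ℝ _ (Set.mem_iUnion.2 ⟨i, Set.add_mem_add rfl (sub_nonneg.2 hx)⟩)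
  simpa [u, smul_add, Finset.sum_add_distrib, ← Finset.sum_smul, ht1] using hmem

end Newton

def newtonExample : Set (Fin 3 → ℝ) :=
  {x ∈ Qk 3 | 3 ≤ ![1, 2, 1] ⬝ᵥ x} ∩ {x ∈ Qk 3 | 3 ≤ ![2, 1, 1] ⬝ᵥ x}

def newtonExampleVertices : Fin 4 → Fin 3 → ℝ :=
  ![![3, 0, 0], ![0, 3, 0], ![0, 0, 3], ![1, 1, 0]]

theorem isElementaryPolyhedron_newtonExample_halfspaces :
    IsElementaryPolyhedron {x ∈ Qk 3 | 3 ≤ ![1, 2, 1] ⬝ᵥ x} ∧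
      IsElementaryPolyhedron {x ∈ Qk 3 | 3 ≤ ![2, 1, 1] ⬝ᵥ x} :=
  ⟨isElementaryPolyhedron_setOf_le_dotProduct (fun i => by fin_cases i <;> norm_num) (by norm_num),
    isElementaryPolyhedron_setOf_le_dotProduct (fun i => by fin_cases i <;> norm_num) (by norm_num)⟩

theorem isNewtonPolyhedron_newtonExample : IsNewtonPolyhedron newtonExample :=
  isElementaryPolyhedron_newtonExample_halfspaces.1.isNewtonPolyhedron.inter
    isElementaryPolyhedron_newtonExample_halfspaces.2.isNewtonPolyhedron

theorem volume_Qk_diff_newtonExample_lt_top : volume (Qk 3 \ newtonExample) < ⊤ := by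
  rw [newtonExample, Set.sdiff_inter]
  exact measure_union_lt_top isElementaryPolyhedron_newtonExample_halfspaces.1.volume_diff_lt_top
    isElementaryPolyhedron_newtonExample_halfspaces.2.volume_diff_lt_top

theorem newtonExampleVertices_mem_Qk (i : Fin 4) : newtonExampleVertices i ∈ Qk 3 := by
  intro j
  fin_cases i <;> fin_cases j <;> norm_num [newtonExampleVertices]

theorem newtonExampleVertices_mem (i : Fin 4) : newtonExampleVertices i ∈ newtonExample := by
  refine ⟨⟨newtonExampleVertices_mem_Qk i, ?_⟩, newtonExampleVertices_mem_Qk i, ?_⟩ <;>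
    fin_cases i <;>
    norm_num [newtonExampleVertices, dotProduct, Fin.sum_univ_three, Matrix.cons_val_two]

theorem newtonExample_subset_convexHull :
    newtonExample ⊆ convexHull ℝ (⋃ i, {newtonExampleVertices i} + Qk 3) := by
  rintro x ⟨⟨hx, hp⟩, -, hq⟩
  norm_num [dotProduct, Fin.sum_univ_three, Matrix.cons_val_two] at hp hq
  have h0 := hx 0
  have h1 := hx 1
  have h2 := hx 2
  suffices ∃ t : Fin 4 → ℝ, 0 ≤ t ∧ ∑ i, t i = 1 ∧ ∑ i, t i • newtonExampleVertices i ≤ x by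
    obtain ⟨t, ht, ht1, htx⟩ := this
    exact mem_convexHull_iUnion_add_of_sum_smul_le ht ht1 htx
  refine (le_or_gt 3 (x 2)).elim (fun hc => ⟨![0, 0, 1, 0], ?_⟩) fun hc =>
    (le_or_gt (3 - x 2) (x 0)).elim (fun ha => ⟨![(3 - x 2) / 3, 0, x 2 / 3, 0], ?_⟩) fun ha =>
    (le_or_gt (3 - x 2) (x 0 + x 1)).elim
      (fun hab => ⟨![x 0 / 3, (3 - x 2 - x 0) / 3, x 2 / 3, 0], ?_⟩) fun hab =>
    ⟨![(2 * x 0 + x 1 + x 2 - 3) / 3, (x 0 + 2 * x 1 + x 2 - 3) / 3, x 2 / 3,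
      3 - x 0 - x 1 - x 2], ?_⟩
  all_goals
    refine ⟨fun i => ?_, ?_, fun j => ?_⟩
    · fin_cases i <;> simp <;> linarith
    · simp [Fin.sum_univ_four] <;> ring
    · fin_cases j <;> simp [Fin.sum_univ_four, newtonExampleVertices] <;> linarith

theorem newtonExample_eq_convexHull :
    newtonExample = convexHull ℝ (⋃ i, {newtonExampleVertices i} + Qk 3) :=
  newtonExample_subset_convexHull.antisymm
    (isNewtonPolyhedron_newtonExample.convexHull_iUnion_add_subset newtonExampleVertices_mem)

theorem not_exists_newtonExample_eq_convexHull_sum_elementary :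
    ¬ ∃ (n : ℕ) (E : Fin n → Set (Fin 3 → ℝ)),
      (∀ i, IsElementaryPolyhedron (E i)) ∧ newtonExample = convexHull ℝ (∑ i, E i) := by
  rintro ⟨n, E, hE, hN⟩
  obtain ⟨σ, hσ, hσ_supermod⟩ := exists_supermodular_support_convexHull_sum_elementary hE
  rw [← hN] at hσ
  set p : Fin 3 → ℝ := ![1, 2, 1]
  set q : Fin 3 → ℝ := ![2, 1, 1]
  have hp : 0 ≤ p := fun i => by fin_cases i <;> simp [p]
  have hq : 0 ≤ q := fun i => by fin_cases i <;> simp [q]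
  have hσp : 3 ≤ σ p := by
    obtain ⟨x, ⟨⟨-, hx⟩, -⟩, hσx⟩ := (hσ p hp).1
    exact hσx ▸ hx
  have hσq : 3 ≤ σ q := by
    obtain ⟨x, ⟨-, -, hx⟩, hσx⟩ := (hσ q hq).1
    exact hσx ▸ hx
  have hσinf : σ (p ⊓ q) ≤ 2 := by
    refine ((hσ _ (le_inf hp hq)).2 ⟨![1, 1, 0], newtonExampleVertices_mem 3, rfl⟩).trans_eq ?_
    norm_num [p, q, dotProduct, Fin.sum_univ_three, Matrix.cons_val_two]
  have hσsup : σ (p ⊔ q) ≤ 3 := by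
    refine ((hσ _ (hp.trans le_sup_left)).2
      ⟨![0, 0, 3], newtonExampleVertices_mem 2, rfl⟩).trans_eq ?_
    norm_num [p, q, dotProduct, Fin.sum_univ_three, Matrix.cons_val_two]
  linarith [hσ_supermod p q]

/-- There is a Newton polyhedron of finite volume, in some dimension `d ≥ 3`, bounded by
finitely many vertices, which is not a sum (convex hull of Minkowski sum) of finitely many
elementary polyhedra. -/
theorem exists_nondecomposable_newton_polyhedron :
    ∃ (d : ℕ), 3 ≤ d ∧ ∃ N : Set (Fin d → ℝ),
      IsNewtonPolyhedron N ∧ volume (Qk d \ N) ≠ ⊤ ∧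
      (∃ (m : ℕ) (w : Fin m → (Fin d → ℝ)), (∀ i, w i ∈ Qk d) ∧
        N = convexHull ℝ (⋃ i, {w i} + Qk d)) ∧
      ¬ ∃ (n : ℕ) (E : Fin n → Set (Fin d → ℝ)),
          (∀ i, IsElementaryPolyhedron (E i)) ∧ N = convexHull ℝ (∑ i, E i) :=
  ⟨3, le_rfl, newtonExample, isNewtonPolyhedron_newtonExample,
    volume_Qk_diff_newtonExample_lt_top.ne,
    ⟨4, newtonExampleVertices, newtonExampleVertices_mem_Qk, newtonExample_eq_convexHull⟩,
    not_exists_newtonExample_eq_convexHull_sum_elementary⟩
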